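/- For all integers a and c and all nonnegative integers b, one has h(a, b, c) − h(a, b, c−1) = (y_{a+b+c−1} − y_c) · h(a−1, b, c) in the polynomial ring ℤ[x_1, x_2, …, y_1, y_2, …]. -/

import Mathlib

/-- A partition, stored `0`-indexed: `p.f k` is the part `λ_{k+1}`. -/
structure YPartition where
  f : ℕ → ℕ
  antitone' : ∀ ⦃i j : ℕ⦄, i ≤ j → f j ≤ f i
  eventually_zero' : ∃ N : ℕ, ∀ i : ℕ, N ≤ i → f i = 0

namespace YPartition

/-- `p.get i` is the part `λ_i` of the partition `p = λ`, for `i ≥ 1`. -/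
def get (p : YPartition) (i : ℕ) : ℕ := p.f (i - 1)

/-- `μ ⊆ λ`, i.e. `μ_i ≤ λ_i` for all `i ≥ 1`. -/
def Sub (mu lam : YPartition) : Prop := ∀ i : ℕ, 1 ≤ i → mu.get i ≤ lam.get i

/-- The empty partition `∅ = (0, 0, 0, …)`. -/
def empty : YPartition where
  f := fun _ => 0
  antitone' := fun _ _ _ => le_rfl
  eventually_zero' := ⟨0, fun _ _ => rfl⟩

/-- The `k`-th entry `λ^t_k = |{i ≥ 1 : λ_i ≥ k}|` of the conjugate partition
(meaningful for `k ≥ 1`). -/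
noncomputable def conjGet (p : YPartition) (k : ℕ) : ℕ :=
  Set.ncard {i : ℕ | 1 ≤ i ∧ k ≤ p.get i}

/-- `Δ(λ) = {λ_i − i : i ≥ 1} ⊆ ℤ`. -/
def delta (p : YPartition) : Set ℤ :=
  {d : ℤ | ∃ i : ℕ, 1 ≤ i ∧ d = (p.get i : ℤ) - (i : ℤ)}

/-- `Δ(λ^t) = {λ^t_i − i : i ≥ 1} ⊆ ℤ`. -/
noncomputable def deltaConj (p : YPartition) : Set ℤ :=
  {d : ℤ | ∃ i : ℕ, 1 ≤ i ∧ d = (p.conjGet i : ℤ) - (i : ℤ)}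

/-- `μ ⋖ ν` : the partition `ν` is obtained from `μ` by increasing one entry by `1`. -/
def Covers (mu nu : YPartition) : Prop :=
  ∃ k : ℕ, 1 ≤ k ∧ nu.get k = mu.get k + 1 ∧
    ∀ i : ℕ, 1 ≤ i → i ≠ k → nu.get i = mu.get i

end YPartition

/-- The skew Young diagram `Y(λ/μ)`: all boxes `(i, j)` with `i ≥ 1` and `μ_i < j ≤ λ_i`. -/
def skewCells (lam mu : YPartition) : Set (ℕ × ℕ) :=
  {c : ℕ × ℕ | 1 ≤ c.1 ∧ mu.get c.1 < c.2 ∧ c.2 ≤ lam.get c.1}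

/-- The Young diagram `Y(λ) = Y(λ/∅)`. -/
def cells (lam : YPartition) : Set (ℕ × ℕ) := skewCells lam YPartition.empty

/-- The hook `H_λ(c)` of a box `c` in `Y(λ)`. -/
def hook (lam : YPartition) (c : ℕ × ℕ) : Set (ℕ × ℕ) :=
  {d : ℕ × ℕ | d ∈ cells lam ∧ ((d.1 = c.1 ∧ c.2 ≤ d.2) ∨ (d.2 = c.2 ∧ c.1 ≤ d.1))}

/-- The hook length `h_λ(c) = |H_λ(c)|`. -/
noncomputable def hookLength (lam : YPartition) (c : ℕ × ℕ) : ℕ := (hook lam c).ncard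

/-- An excited move replaces a box `(i, j)` of the diagram `D` by `(i+1, j+1)`, provided
that none of `(i+1, j)`, `(i, j+1)`, `(i+1, j+1)` lies in `D`. -/
def ExcitedMove (D E : Set (ℕ × ℕ)) : Prop :=
  ∃ i j : ℕ, (i, j) ∈ D ∧ (i + 1, j) ∉ D ∧ (i, j + 1) ∉ D ∧ (i + 1, j + 1) ∉ D ∧
    E = insert (i + 1, j + 1) (D \ {(i, j)})

/-- `E` is an excitation of `D`: it is obtained from `D` by a finite sequence of
excited moves. -/
def IsExcitation (D E : Set (ℕ × ℕ)) : Prop := Relation.ReflTransGen ExcitedMove D E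

/-- `𝓔(λ/μ)`: the set of all excitations `E` of `Y(μ)` satisfying `E ⊆ Y(λ)`. -/
def excitations (lam mu : YPartition) : Set (Set (ℕ × ℕ)) :=
  {E : Set (ℕ × ℕ) | IsExcitation (cells mu) E ∧ E ⊆ cells lam}

/-- Standard tableaux of shape `λ/μ`, encoded as functions `ℕ × ℕ → ℕ` that vanish outside
of `Y(λ/μ)`, restrict to a bijection `Y(λ/μ) → {1, …, n}` where `n = |Y(λ/μ)|`, and
increase left-to-right along rows and top-to-bottom down columns. -/
def SYT (lam mu : YPartition) : Set (ℕ × ℕ → ℕ) :=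
  {T : ℕ × ℕ → ℕ |
    (∀ c : ℕ × ℕ, c ∉ skewCells lam mu → T c = 0) ∧
    Set.BijOn T (skewCells lam mu) (Set.Icc 1 (skewCells lam mu).ncard) ∧
    (∀ i j : ℕ, (i, j) ∈ skewCells lam mu → (i, j + 1) ∈ skewCells lam mu →
      T (i, j) < T (i, j + 1)) ∧
    (∀ i j : ℕ, (i, j) ∈ skewCells lam mu → (i + 1, j) ∈ skewCells lam mu →
      T (i, j) < T (i + 1, j))}

/-- Semistandard tableaux of shape `μ`, encoded as functions `ℕ × ℕ → ℕ` that vanish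
outside of `Y(μ)`, take positive values on `Y(μ)`, increase weakly along rows and
strictly down columns. -/
def SSYT (mu : YPartition) : Set (ℕ × ℕ → ℕ) :=
  {T : ℕ × ℕ → ℕ |
    (∀ c : ℕ × ℕ, c ∉ cells mu → T c = 0) ∧
    (∀ c ∈ cells mu, 1 ≤ T c) ∧
    (∀ i j : ℕ, (i, j) ∈ cells mu → (i, j + 1) ∈ cells mu → T (i, j) ≤ T (i, j + 1)) ∧
    (∀ i j : ℕ, (i, j) ∈ cells mu → (i + 1, j) ∈ cells mu → T (i, j) < T (i + 1, j))}

/-- `b`-flagged semistandard tableaux of shape `μ`: all entries in row `i` are `≤ b i`. -/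
def FSSYT (mu : YPartition) (b : ℕ → ℕ) : Set (ℕ × ℕ → ℕ) :=
  {T ∈ SSYT mu | ∀ c ∈ cells mu, T c ≤ b c.1}

/-- The flagging induced by `λ/μ`: `b_i = max {k ≥ 0 : λ_k − k ≥ μ_i − i}`, where
`λ_0 = +∞` (so that `k = 0` always belongs to the set). -/
noncomputable def inducedFlagging (lam mu : YPartition) (i : ℕ) : ℕ :=
  sSup {k : ℕ | k = 0 ∨ (mu.get i : ℤ) - (i : ℤ) ≤ (lam.get k : ℤ) - (k : ℤ)}

/-- The diagram `D(T) = {(T(i,j), T(i,j) + j − i) : (i,j) ∈ Y(μ)}` associated to a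
semistandard tableau `T` of shape `μ` (note that `T(i,j) ≥ i` for semistandard `T`,
so the truncated subtraction is exact). -/
def excitedDiagram (mu : YPartition) (T : ℕ × ℕ → ℕ) : Set (ℕ × ℕ) :=
  (fun c : ℕ × ℕ => (T c, T c + c.2 - c.1)) '' cells mu

/-- The field of rational functions over `ℚ` in the indeterminates `z_i`, `i ∈ ℤ`. -/
abbrev KK : Type := FractionRing (MvPolynomial ℤ ℚ)

/-- The indeterminate `z_i` viewed inside `KK`. -/
noncomputable def Zvar (i : ℤ) : KK :=
  algebraMap (MvPolynomial ℤ ℚ) KK (MvPolynomial.X i)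

/-- The content `c_T(k) = j − i`, where `(i, j)` is the box of `T` containing the
entry `k`. -/
noncomputable def contentOf (T : ℕ × ℕ → ℕ) (k : ℕ) : ℤ :=
  ((Classical.epsilon fun c : ℕ × ℕ => T c = k).2 : ℤ) -
    ((Classical.epsilon fun c : ℕ × ℕ => T c = k).1 : ℤ)

/-- `z_T = 1 / ∏_{k=1}^n (z_{c_T(k)} + z_{c_T(k+1)} + ⋯ + z_{c_T(n)})` for a standard
tableau `T` of shape `λ/μ`, where `n = |Y(λ/μ)|`. -/
noncomputable def zT (lam mu : YPartition) (T : ℕ × ℕ → ℕ) : KK :=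
  (∏ k ∈ Finset.Icc 1 (skewCells lam mu).ncard,
    ∑ l ∈ Finset.Icc k (skewCells lam mu).ncard, Zvar (contentOf T l))⁻¹

/-- The algebraic hook length `h_λ(c; z) = Σ_{(i,j) ∈ H_λ(c)} z_{j−i}`. -/
noncomputable def hookZ (lam : YPartition) (c : ℕ × ℕ) : KK :=
  ∑ᶠ d ∈ hook lam c, Zvar ((d.2 : ℤ) - (d.1 : ℤ))

/-- The polynomial ring `ℤ[x_1, x_2, …, y_1, y_2, …]`. -/
abbrev Rxy : Type := MvPolynomial (ℕ ⊕ ℕ) ℤ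

/-- The indeterminate `x_i` for `i ≥ 1`, with the convention `x_i = 0` for `i ≤ 0`. -/
noncomputable def xv (i : ℤ) : Rxy :=
  if 1 ≤ i then MvPolynomial.X (Sum.inl i.toNat) else 0

/-- The indeterminate `y_i` for `i ≥ 1`, with the convention `y_i = 0` for `i ≤ 0`. -/
noncomputable def yv (i : ℤ) : Rxy :=
  if 1 ≤ i then MvPolynomial.X (Sum.inr i.toNat) else 0

/-- `s_λ[μ] = Σ_{D ∈ 𝓔(λ/μ)} ∏_{(i,j) ∈ D} (x_i + y_j)`. -/
noncomputable def slam (lam mu : YPartition) : Rxy :=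
  ∑ᶠ D ∈ excitations lam mu, ∏ᶠ c ∈ D, (xv (c.1 : ℤ) + yv (c.2 : ℤ))

/-- The `h`-polynomial `h(a, b, c) = Σ_{1 ≤ i_1 ≤ ⋯ ≤ i_a ≤ b} ∏_{j=1}^a
(x_{i_j} + y_{i_j + (j−1) + c})`, with `h(a, b, c) = 0` for `a < 0`
(and `h(0, b, c) = 1`). -/
noncomputable def hpoly (a : ℤ) (b : ℕ) (c : ℤ) : Rxy :=
  if a < 0 then 0
  else ∑ᶠ t ∈ {t : Fin a.toNat → ℕ | (∀ j, t j ∈ Finset.Icc 1 b) ∧ Monotone t},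
    ∏ j : Fin a.toNat, (xv (t j : ℤ) + yv ((t j : ℤ) + ((j : ℕ) : ℤ) + c))

/-- The element `h_{b; q}[d] = Σ_{1 ≤ i_1 ≤ ⋯ ≤ i_q ≤ b} ∏_{j=1}^q u_{i_j, j−d}` of `R`,
understood to be `0` if `q < 0` (and `1` if `q = 0`). -/
noncomputable def hGen {R : Type*} [CommRing R] (u : ℤ → ℤ → R) (b : ℕ) (q d : ℤ) : R :=
  if q < 0 then 0
  else ∑ᶠ t ∈ {t : Fin q.toNat → ℕ | (∀ j, t j ∈ Finset.Icc 1 b) ∧ Monotone t},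
    ∏ j : Fin q.toNat, u (t j : ℤ) (((j : ℕ) : ℤ) + 1 - d)

open Classical in
noncomputable def hdom (m b : ℕ) : Finset (Fin m → ℕ) :=
  (Fintype.piFinset fun _ : Fin m => Finset.Icc 1 b).filter (fun t => Monotone t)

noncomputable def H (m b : ℕ) (c : ℤ) : Rxy :=
  ∑ t ∈ hdom m b, ∏ j : Fin m, (xv (t j : ℤ) + yv ((t j : ℤ) + ((j : ℕ) : ℤ) + c))

lemma mem_hdom {m b : ℕ} {t : Fin m → ℕ} :
    t ∈ hdom m b ↔ (∀ j, t j ∈ Finset.Icc 1 b) ∧ Monotone t := by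
  simp [hdom, Fintype.mem_piFinset]

lemma hpoly_natCast (m b : ℕ) (c : ℤ) : hpoly (m : ℤ) b c = H m b c := by
  rw [hpoly, if_neg (by omega)]
  have hs : {t : Fin (m : ℤ).toNat → ℕ | (∀ j, t j ∈ Finset.Icc 1 b) ∧ Monotone t}
      = (hdom m b : Set (Fin m → ℕ)) := by
    ext t; simp [mem_hdom]
  rw [hs, finsum_mem_coe_finset]; rfl

lemma H_zero (b : ℕ) (c : ℤ) : H 0 b c = 1 := by
  have h1 : hdom 0 b = {fun j => j.elim0} := by
    ext t
    simp only [mem_hdom, Finset.mem_singleton]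
    constructor
    · intro _; funext j; exact j.elim0
    · intro h; exact ⟨fun j => j.elim0, fun i => i.elim0⟩
  simp [H, h1]

lemma H_b_zero (m : ℕ) (c : ℤ) : H (m+1) 0 c = 0 := by
  have : hdom (m+1) 0 = ∅ := by
    apply Finset.eq_empty_of_forall_notMem
    intro t ht
    have := (mem_hdom.mp ht).1 0
    simp at this
  simp [H, this]

lemma H_rec (m b : ℕ) (c : ℤ) :
    H (m+1) (b+1) c = H (m+1) b c
      + (xv ((b:ℤ)+1) + yv ((b:ℤ)+1+m+c)) * H m (b+1) c := by
  classical
  rw [H, ← Finset.sum_filter_add_sum_filter_not (hdom (m+1) (b+1))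
      (fun t => t (Fin.last m) ≤ b)]
  congr 1
  · -- first part: equals H (m+1) b c
    rw [H]
    congr 1
    ext t
    simp only [Finset.mem_filter, mem_hdom]
    constructor
    · rintro ⟨⟨h1, h2⟩, h3⟩
      refine ⟨fun j => ?_, h2⟩
      have := h1 j
      have hle : t j ≤ t (Fin.last m) := h2 (Fin.le_last j)
      simp only [Finset.mem_Icc] at this ⊢
      omega
    · rintro ⟨h1, h2⟩
      refine ⟨⟨fun j => ?_, h2⟩, ?_⟩
      · have := h1 j; simp only [Finset.mem_Icc] at this ⊢; omega
      · have := h1 (Fin.last m); simp only [Finset.mem_Icc] at this; omega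
  · -- second part: last entry is b+1
    rw [H, Finset.mul_sum]
    refine Finset.sum_nbij' (fun t => Fin.init t) (fun s => Fin.snoc s (b+1)) ?_ ?_ ?_ ?_ ?_
    · intro t ht
      simp only [Finset.mem_filter, mem_hdom] at ht
      obtain ⟨⟨h1, h2⟩, h3⟩ := ht
      rw [mem_hdom]
      exact ⟨fun j => h1 j.castSucc, fun i j hij => h2 (Fin.castSucc_le_castSucc_iff.mpr hij)⟩
    · intro s hs
      rw [mem_hdom] at hs
      obtain ⟨h1, h2⟩ := hs
      have hlast : (Fin.snoc s (b+1) : Fin (m+1) → ℕ) (Fin.last m) = b + 1 := by simp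
      simp only [Finset.mem_filter, mem_hdom]
      refine ⟨⟨fun j => ?_, ?_⟩, by omega⟩
      · rcases Fin.eq_castSucc_or_eq_last j with ⟨k, rfl⟩ | rfl
        · rw [Fin.snoc_castSucc]
          have := h1 k; simp only [Finset.mem_Icc] at this ⊢; omega
        · rw [hlast]; simp
      · rw [Fin.monotone_iff_le_succ]
        intro i
        rw [Fin.snoc_castSucc]
        rcases Fin.eq_castSucc_or_eq_last i.succ with ⟨k, hk⟩ | hk
        · rw [hk, Fin.snoc_castSucc]
          apply h2
          have hv : (k : ℕ) = (i : ℕ) + 1 := by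
            have := congrArg Fin.val hk
            simpa using this.symm
          exact Fin.le_def.mpr (by omega)
        · rw [hk, Fin.snoc_last]
          have := h1 i; simp only [Finset.mem_Icc] at this; omega
    · intro t ht
      simp only [Finset.mem_filter, mem_hdom] at ht
      obtain ⟨⟨h1, h2⟩, h3⟩ := ht
      have hlast : t (Fin.last m) = b + 1 := by
        have := h1 (Fin.last m); simp only [Finset.mem_Icc] at this; omega
      rw [← hlast]
      exact Fin.snoc_init_self t
    · intro s hs
      exact Fin.init_snoc _ _
    · intro t ht
      simp only [Finset.mem_filter, mem_hdom] at ht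
      obtain ⟨⟨h1, h2⟩, h3⟩ := ht
      have hlast : t (Fin.last m) = b + 1 := by
        have := h1 (Fin.last m); simp only [Finset.mem_Icc] at this; omega
      rw [Fin.prod_univ_castSucc, mul_comm]
      have hfac : (xv (t (Fin.last m) : ℤ)
            + yv ((t (Fin.last m) : ℤ) + ((Fin.last m : ℕ) : ℤ) + c))
          = xv ((b:ℤ)+1) + yv ((b:ℤ)+1+m+c) := by
        rw [hlast]; push_cast [Fin.val_last]; ring_nf
      rw [hfac]
      congr 1
      all_goals exact Finset.prod_congr rfl fun j _ => by simp [Fin.init]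
  
lemma key : ∀ (N m b : ℕ) (c : ℤ), m + b ≤ N →
    H (m+1) b c - H (m+1) b (c-1)
      = (yv ((m:ℤ)+1+b+c-1) - yv c) * H m b c := by
  intro N
  induction N with
  | zero =>
    intro m b c h
    obtain ⟨rfl, rfl⟩ : m = 0 ∧ b = 0 := by omega
    rw [H_b_zero, H_b_zero, H_zero]
    linear_combination (norm := ring_nf) (0 : Rxy)
  | succ N ih =>
    intro m b c h
    cases b with
    | zero =>
      rw [H_b_zero, H_b_zero]
      cases m with
      | zero =>
        rw [H_zero]
        linear_combination (norm := ring_nf) (0 : Rxy)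
      | succ m' => rw [H_b_zero]; ring
    | succ b' =>
      rw [H_rec m b' c, H_rec m b' (c-1)]
      cases m with
      | zero =>
        have h0 := ih 0 b' c (by omega)
        simp only [H_zero] at h0 ⊢
        push_cast at h0 ⊢
        linear_combination (norm := ring_nf) h0
      | succ m' =>
        have IH1 := ih (m'+1) b' c (by omega)
        have IH2 := ih m' (b'+1) c (by omega)
        have hrec := H_rec m' b' c
        push_cast at IH1 IH2 hrec ⊢
        linear_combination (norm := ring_nf) IH1
          + (xv ((b':ℤ)+1) + yv ((m':ℤ)+1+b'+c)) * IH2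
          + (yv c - yv ((m':ℤ)+1+b'+c)) * hrec


/-- For all integers `a` and `c` and all nonnegative integers `b`, one has
`h(a, b, c) − h(a, b, c−1) = (y_{a+b+c−1} − y_c) · h(a−1, b, c)`. -/
theorem hpoly_recursion_three (a c : ℤ) (b : ℕ) :
    hpoly a b c - hpoly a b (c - 1) =
      (yv (a + (b : ℤ) + c - 1) - yv c) * hpoly (a - 1) b c := by
  have hneg : ∀ (a' c' : ℤ), a' < 0 → hpoly a' b c' = 0 := fun a' c' h => by
    rw [hpoly, if_pos h]
  rcases lt_trichotomy a 0 with ha | rfl | ha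
  · rw [hneg a c ha, hneg a (c-1) ha, hneg (a-1) c (by omega)]
    ring
  · have e0 : hpoly 0 b c = 1 := by
      rw [show (0:ℤ) = ((0:ℕ):ℤ) from rfl, hpoly_natCast, H_zero]
    have e1 : hpoly 0 b (c-1) = 1 := by
      rw [show (0:ℤ) = ((0:ℕ):ℤ) from rfl, hpoly_natCast, H_zero]
    rw [e0, e1, hneg (0-1) c (by norm_num)]
    ring
  · obtain ⟨m, rfl⟩ : ∃ m : ℕ, a = (m:ℤ) + 1 := ⟨(a-1).toNat, by omega⟩
    rw [show (m:ℤ) + 1 = ((m+1 : ℕ) : ℤ) by push_cast; ring,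
        show ((m+1:ℕ):ℤ) - 1 = ((m:ℕ):ℤ) by push_cast; ring,
        hpoly_natCast, hpoly_natCast, hpoly_natCast]
    have hk := key (m+b) m b c le_rfl
    rw [show ((m+1:ℕ):ℤ) + (b:ℤ) + c - 1 = (m:ℤ)+1+(b:ℤ)+c-1 by push_cast; ring]
    exact hk
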